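/- arXiv:2508.20226 — 3 statements merged into one kernel-verified Lean document; each statement's English description precedes it below -/
import Mathlib

section
/- For any index i with 1 ≤ i ≤ n-2 and scalars z_1, z_2, z_3, the braid matrices satisfy the hexavalent (braid-move) identity B_i(z_3) · B_{i+1}(z_2) · B_i(z_1) = B_{i+1}(z_1) · B_i(z_2 − z_1·z_3) · B_{i+1}(z_3). -/
open Matrix

def permP (n : ℕ) (R : Type*) [CommRing R] (i : ℕ) : Matrix (Fin n) (Fin n) R :=
  Matrix.of fun k l =>
    if (k : ℕ) = i ∧ (l : ℕ) = i + 1 then 1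
    else if (k : ℕ) = i + 1 ∧ (l : ℕ) = i then 1
    else if (k : ℕ) = i ∧ (l : ℕ) = i then 0
    else if (k : ℕ) = i + 1 ∧ (l : ℕ) = i + 1 then 0
    else if k = l then 1 else 0

def transS (n : ℕ) (R : Type*) [CommRing R] (i j : ℕ) (z : R) :
    Matrix (Fin n) (Fin n) R :=
  Matrix.of fun k l =>
    (if k = l then 1 else 0) + (if (k : ℕ) = i ∧ (l : ℕ) = j then z else 0)

def braidB (n : ℕ) (R : Type*) [CommRing R] (i : ℕ) (z : R) :
    Matrix (Fin n) (Fin n) R :=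
  Matrix.of fun k l =>
    if (k : ℕ) = i ∧ (l : ℕ) = i then 0
    else if (k : ℕ) = i ∧ (l : ℕ) = i + 1 then 1
    else if (k : ℕ) = i + 1 ∧ (l : ℕ) = i then 1
    else if (k : ℕ) = i + 1 ∧ (l : ℕ) = i + 1 then z
    else if k = l then 1 else 0

def diagD (n : ℕ) (R : Type*) [CommRing R] (i : ℕ) (t : R) :
    Matrix (Fin n) (Fin n) R :=
  Matrix.diagonal fun m => if (m : ℕ) = i then t else 1

def chiM (n : ℕ) (R : Type*) [CommRing R] (i k : ℕ) (a b : R) :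
    Matrix (Fin n) (Fin n) R :=
  Matrix.diagonal fun m => if (m : ℕ) = i then a else if (m : ℕ) = k then b else 1

/-! Left multiplication by `B_i(z)` is the row operation `(rᵢ, rᵢ₊₁) ↦ (rᵢ₊₁, rᵢ + z rᵢ₊₁)`.
Composing these on rows `i, i+1, i+2`, both sides send `(rᵢ, rᵢ₊₁, rᵢ₊₂)` to
`(rᵢ₊₂, rᵢ₊₁ + z₃ rᵢ₊₂, rᵢ + z₁ rᵢ₊₁ + z₂ rᵢ₊₂)`; on the right the last coefficient arises as
`(z₂ - z₁ z₃) + z₁ z₃`. -/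

section BraidRows

variable {n : ℕ} {R : Type*} [CommRing R] {i : ℕ}

theorem braidB_row (h : i + 1 < n) (z : R) (k : Fin n) :
    braidB n R i z k =
      if (k : ℕ) = i then Pi.single ⟨i + 1, h⟩ 1
      else if (k : ℕ) = i + 1 then Pi.single ⟨i, by omega⟩ 1 + Pi.single ⟨i + 1, h⟩ z
      else Pi.single k 1 := by
  ext l
  split_ifs <;>
    simp only [braidB, Matrix.of_apply, Pi.add_apply, Pi.single_apply, Fin.ext_iff] <;>
    split_ifs <;> first | omega | simp

theorem braidB_mul_row (h : i + 1 < n) (z : R) (M : Matrix (Fin n) (Fin n) R) (k : Fin n) :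
    (braidB n R i z * M) k =
      if (k : ℕ) = i then M ⟨i + 1, h⟩
      else if (k : ℕ) = i + 1 then M ⟨i, by omega⟩ + z • M ⟨i + 1, h⟩
      else M k := by
  rw [Matrix.mul_apply_eq_vecMul, braidB_row h]
  split_ifs <;> simp only [Matrix.add_vecMul, Matrix.single_vecMul, one_smul, Matrix.row]

theorem braidB_braid_relation_mul (hi : i + 2 < n) (z₁ z₂ z₃ : R)
    (M : Matrix (Fin n) (Fin n) R) :
    braidB n R i z₃ * (braidB n R (i + 1) z₂ * (braidB n R i z₁ * M)) =
      braidB n R (i + 1) z₁ * (braidB n R i (z₂ - z₁ * z₃) * (braidB n R (i + 1) z₃ * M)) := by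
  have h1 : i + 1 < n := by omega
  funext ⟨k, hk⟩
  obtain rfl | rfl | rfl | hk' :
      k = i ∨ k = i + 1 ∨ k = i + 2 ∨ (k ≠ i ∧ k ≠ i + 1 ∧ k ≠ i + 2) := by omega
  all_goals
    simp (disch := omega) only [braidB_mul_row h1, braidB_mul_row hi, if_pos, if_neg, if_true]
  module

end BraidRows

/-- Hexavalent (braid-move) identity for braid matrices:
`B_i(z₃) B_{i+1}(z₂) B_i(z₁) = B_{i+1}(z₁) B_i(z₂ - z₁z₃) B_{i+1}(z₃)`. -/
theorem braid_matrices_hexavalent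
    (n : ℕ) (R : Type*) [CommRing R] (i : ℕ) (hi : i + 2 < n)
    (z₁ z₂ z₃ : R) :
    braidB n R i z₃ * braidB n R (i + 1) z₂ * braidB n R i z₁ =
      braidB n R (i + 1) z₁ * braidB n R i (z₂ - z₁ * z₃) *
        braidB n R (i + 1) z₃ := by
  simpa only [Matrix.mul_assoc, Matrix.mul_one] using braidB_braid_relation_mul hi z₁ z₂ z₃ 1
end

section
/- For any index i and scalars z_1, z_2 with z_2 invertible, the trivalent identity holds: B_i(z_2) · B_i(z_1) = V · B_i(z_1 + z_2^{-1}), where V is the n×n identity matrix with the 2×2 upper-triangular block [[−z_2^{-1}, 1],[0, z_2]] inserted in rows/columns i, i+1. In particular V is upper triangular and invertible. -/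
open Matrix

/-- The upper triangular matrix appearing at a trivalent vertex: identity with
the block `[[-z₂⁻¹, 1], [0, z₂]]` in rows/columns `i, i+1`. -/
def Vtri (n : ℕ) (K : Type*) [Field K] (i : ℕ) (z₂ : K) :
    Matrix (Fin n) (Fin n) K :=
  Matrix.of fun k l =>
    if (k : ℕ) = i ∧ (l : ℕ) = i then -z₂⁻¹
    else if (k : ℕ) = i ∧ (l : ℕ) = i + 1 then 1
    else if (k : ℕ) = i + 1 ∧ (l : ℕ) = i + 1 then z₂
    else if k = l then 1 else 0

set_option maxHeartbeats 1000000 in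
/-- Trivalent identity: `B_i(z₂) B_i(z₁) = V ⬝ B_i(z₁ + z₂⁻¹)` for the upper
triangular invertible `V = Vtri`. -/
theorem braid_matrices_trivalent
    (n : ℕ) (K : Type*) [Field K] (i : ℕ) (hi : i + 1 < n)
    (z₁ z₂ : K) (hz₂ : z₂ ≠ 0) :
    braidB n K i z₂ * braidB n K i z₁ =
        Vtri n K i z₂ * braidB n K i (z₁ + z₂⁻¹) ∧
      (∀ k l : Fin n, (l : ℕ) < (k : ℕ) → Vtri n K i z₂ k l = 0) ∧
      IsUnit (Vtri n K i z₂) := by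
  have hi1 : i < n := by omega
  set i1 : Fin n := ⟨i, hi1⟩ with hi1def
  set i2 : Fin n := ⟨i + 1, hi⟩ with hi2def
  have hv1 : (i1 : ℕ) = i := rfl
  have hv2 : (i2 : ℕ) = i + 1 := rfl
  have h12 : i1 ≠ i2 := by
    intro h; have := congrArg (Fin.val) h; simp [hv1, hv2] at this
  -- key sum-splitting lemma
  have key : ∀ A B : Matrix (Fin n) (Fin n) K,
      (∀ k j : Fin n, (j : ℕ) ≠ i → (j : ℕ) ≠ i + 1 →
        A k j = if k = j then 1 else 0) →
      ∀ k l : Fin n, (A * B) k l =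
        A k i1 * B i1 l + A k i2 * B i2 l +
          (if k ∈ ({i1, i2} : Finset (Fin n))ᶜ then B k l else 0) := by
    intro A B hA k l
    rw [Matrix.mul_apply, ← Finset.sum_add_sum_compl ({i1, i2} : Finset (Fin n))]
    congr 1
    · rw [Finset.sum_pair h12]
    · rw [Finset.sum_congr rfl (fun j hj => ?_), Finset.sum_ite_eq]
      simp only [Finset.mem_compl, Finset.mem_insert, Finset.mem_singleton, not_or] at hj
      rw [hA k j (fun h => hj.1 (Fin.ext h)) (fun h => hj.2 (Fin.ext h))]
      split_ifs <;> ring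
  have hAb : ∀ z : K, ∀ k j : Fin n, (j : ℕ) ≠ i → (j : ℕ) ≠ i + 1 →
      braidB n K i z k j = if k = j then 1 else 0 := by
    intro z k j hj1 hj2
    simp only [braidB, Matrix.of_apply, Fin.ext_iff]
    split_ifs <;> first | rfl | omega
  have hAv : ∀ k j : Fin n, (j : ℕ) ≠ i → (j : ℕ) ≠ i + 1 →
      Vtri n K i z₂ k j = if k = j then 1 else 0 := by
    intro k j hj1 hj2
    simp only [Vtri, Matrix.of_apply, Fin.ext_iff]
    split_ifs <;> first | rfl | omega
  refine ⟨?_, ?_, ?_⟩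
  · ext k l
    rw [key _ _ (hAb z₂) k l, key _ _ hAv k l]
    simp only [Finset.mem_compl, Finset.mem_insert, Finset.mem_singleton, not_or]
    simp only [braidB, Vtri, Matrix.of_apply, Fin.ext_iff, hv1, hv2]
    rcases eq_or_ne (k : ℕ) i with hk | hk <;>
      rcases eq_or_ne (k : ℕ) (i + 1) with hk2 | hk2 <;>
      rcases eq_or_ne (l : ℕ) i with hl | hl <;>
      rcases eq_or_ne (l : ℕ) (i + 1) with hl2 | hl2 <;>
      first
        | omega
        | (simp [hk, hk2, hl, hl2, eq_comm]
           try rw [if_neg (by omega : ¬ i = (l : ℕ))]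
           try (field_simp; ring)
           try exact fun h => absurd h.symm hl)
  · intro k l hlk
    simp only [Vtri, Matrix.of_apply, Fin.ext_iff]
    split_ifs <;> first | rfl | omega
  · have hbt : (Vtri n K i z₂).BlockTriangular id := by
      intro k l h
      simp only [Vtri, Matrix.of_apply, Fin.ext_iff]
      have : (l : ℕ) < (k : ℕ) := h
      split_ifs <;> first | rfl | omega
    rw [Matrix.isUnit_iff_isUnit_det, isUnit_iff_ne_zero,
      Matrix.det_of_upperTriangular hbt]
    refine Finset.prod_ne_zero_iff.2 fun m _ => ?_
    simp only [Vtri, Matrix.of_apply]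
    split_ifs with h1 h2 h3 h4 <;>
      first
        | exact neg_ne_zero.2 (inv_ne_zero hz₂)
        | exact one_ne_zero
        | exact hz₂
        | omega
        | simp at h4
end

section
/- For n = 2 and β = σ_1^3, on the braid variety X(σ_1^3) = {(z_1,z_2,z_3) ∈ ℂ³ : z_1 z_2 z_3 = z_1 + z_3}, with the functions A_1 = z_2 and A_2 = z_2·z_3 − 1, the map {(z_1,z_2,z_3) ∈ X(σ_1^3) : z_2 ≠ 0, z_2 z_3 − 1 ≠ 0} → (ℂ*)², (z_1,z_2,z_3) ↦ (z_2, z_2 z_3 − 1), is a bijection. -/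
/-- On the braid variety `X(σ₁³) = {(z₁,z₂,z₃) ∈ ℂ³ : z₁ z₂ z₃ = z₁ + z₃}`,
the map `(z₁,z₂,z₃) ↦ (A₁, A₂) = (z₂, z₂ z₃ - 1)` restricts to a bijection
from the locus `{A₁ ≠ 0, A₂ ≠ 0}` onto the algebraic torus `ℂ* × ℂ*`. -/
theorem cluster_torus_chart_sigma1_cubed :
    ∃ e : {p : ℂ × ℂ × ℂ //
            p.1 * p.2.1 * p.2.2 = p.1 + p.2.2 ∧
            p.2.1 ≠ 0 ∧ p.2.1 * p.2.2 - 1 ≠ 0} ≃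
          {q : ℂ × ℂ // q.1 ≠ 0 ∧ q.2 ≠ 0},
      ∀ p, (e p : ℂ × ℂ) = (p.val.2.1, p.val.2.1 * p.val.2.2 - 1) := by
  refine ⟨{
    toFun := fun p => ⟨(p.val.2.1, p.val.2.1 * p.val.2.2 - 1), p.prop.2.1, p.prop.2.2⟩
    invFun := fun q => ⟨((q.val.2 + 1) / (q.val.1 * q.val.2), q.val.1,
        (q.val.2 + 1) / q.val.1), ?_, q.prop.1, ?_⟩
    left_inv := ?_
    right_inv := ?_ }, fun p => rfl⟩
  · obtain ⟨⟨a, b⟩, ha, hb⟩ := q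
    field_simp
    ring
  · obtain ⟨⟨a, b⟩, ha, hb⟩ := q
    field_simp
    simpa using hb
  · rintro ⟨⟨z₁, z₂, z₃⟩, hc, h₂, h₃⟩
    ext
    · show (z₂ * z₃ - 1 + 1) / (z₂ * (z₂ * z₃ - 1)) = z₁
      field_simp
      simp only [] at hc
      linear_combination (-z₂) * hc
    · rfl
    · show (z₂ * z₃ - 1 + 1) / z₂ = z₃
      field_simp
      ring
  · rintro ⟨⟨a, b⟩, ha, hb⟩
    ext <;> simp
    field_simp
    ring
end
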